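/- arXiv:2101.09508 — 5 statements merged into one kernel-verified Lean document; each statement's English description precedes it below -/
import Mathlib

section
/- Let G be a topological group admitting a neighbourhood basis at the identity consisting of open subgroups, and let H be a dense subgroup of G. If U is a subgroup of H that is open in the subspace topology of H, then the closure of U in G is an open subgroup of G. -/
/-!
Pull a basic open subgroup `K` of `G` inside the neighbourhood of `1` witnessing that `U` is open
in `H`, so that `K ∩ H ⊆ U`. Since `H` is dense and `K` is open, `K ⊆ closure (K ∩ H)`, hence the
closure of `U` contains the open subgroup `K` and is therefore open.
-/

namespace Subgroup

variable {G : Type*} [Group G] [TopologicalSpace G]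

theorem exists_isOpen_inf_le_map_subtype
    (hbasis : (nhds (1 : G)).HasBasis (fun K : Subgroup G => IsOpen (K : Set G))
      (fun K : Subgroup G => (K : Set G)))
    {H : Subgroup G} {U : Subgroup H} (hU : IsOpen (U : Set H)) :
    ∃ K : Subgroup G, IsOpen (K : Set G) ∧ K ⊓ H ≤ U.map H.subtype := by
  have hbasisH := (nhds_subtype (H : Set G) 1 ▸ hbasis.comap Subtype.val :
    (nhds (1 : H)).HasBasis _ _)
  obtain ⟨K, hKopen, hKU⟩ := hbasisH.mem_iff.mp (hU.mem_nhds U.one_mem)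
  exact ⟨K, hKopen, fun x ⟨hxK, hxH⟩ => ⟨⟨x, hxH⟩, hKU hxK, rfl⟩⟩

variable [IsTopologicalGroup G]

theorem isOpen_topologicalClosure_of_inf_le {H S K : Subgroup G} (hH : Dense (H : Set G))
    (hK : IsOpen (K : Set G)) (hKS : K ⊓ H ≤ S) :
    IsOpen (S.topologicalClosure : Set G) := by
  refine isOpen_mono (fun x hx => ?_) hK
  exact _root_.closure_mono (show (K : Set G) ∩ H ⊆ S from hKS)
    (hH.open_subset_closure_inter hK hx)

end Subgroup

/-- Let `G` be a topological group admitting a neighbourhood basis at the identity consisting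
of open subgroups, and let `H` be a dense subgroup of `G`.  If `U` is a subgroup of `H` that
is open in the subspace topology of `H`, then the closure of `U` in `G` is an open subgroup
of `G`. -/
theorem stmt_6 {G : Type*} [Group G] [TopologicalSpace G] [IsTopologicalGroup G]
    (hbasis : (nhds (1 : G)).HasBasis (fun K : Subgroup G => IsOpen (K : Set G))
      (fun K : Subgroup G => (K : Set G)))
    (H : Subgroup G) (hH : Dense (H : Set G))
    (U : Subgroup H) (hU : IsOpen (U : Set H)) :
    IsOpen (((U.map H.subtype).topologicalClosure : Subgroup G) : Set G) := by
  obtain ⟨K, hKopen, hKU⟩ := Subgroup.exists_isOpen_inf_le_map_subtype hbasis hU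
  exact Subgroup.isOpen_topologicalClosure_of_inf_le hH hKopen hKU
end

section
/- Let H be a subgroup of the group of all permutations of ℕ such that every element of H has finite support (i.e., for each x ∈ H the set {i ∈ ℕ : x(i) ≠ i} is finite) and such that every orbit of the natural action of H on ℕ is finite. Then every element x of H has a finite conjugacy class in H, i.e., the set {h x h⁻¹ : h ∈ H} is finite (H is an FC-group). -/
/-! A conjugate `h x h⁻¹` moves exactly the points `h '' supp x`, so all conjugates of `x` by
elements of `H` are supported in the union of the `H`-orbits of the finitely many points moved
by `x`. That union is a finite set `T`, and only finitely many permutations are supported in `T`,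
namely the extensions of the permutations of `T`. -/

namespace Equiv.Perm

variable {α : Type*}

theorem setOf_conj_apply_ne (h x : Perm α) :
    {i | (h * x * h⁻¹) i ≠ i} = h '' {i | x i ≠ i} := by
  rw [h.image_eq_preimage_symm]
  ext i
  simp only [Set.mem_ofPred_eq, Set.mem_preimage, mul_apply, ne_eq]
  rw [← inv_def, ← eq_inv_iff_eq]

theorem finite_setOf_apply_ne_subset {s : Set α} (hs : s.Finite) :
    {σ : Perm α | {i | σ i ≠ i} ⊆ s}.Finite := by
  classical
  have : Finite s := hs
  refine (Set.finite_range (ofSubtype : Perm s →* Perm α)).subset fun σ hσ => ?_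
  have hmaps : ∀ i, σ i ∈ s ↔ i ∈ s := fun i => by
    by_cases hi : σ i = i
    · rw [hi]
    · exact iff_of_true (hσ fun h => hi (σ.injective h)) (hσ hi)
  exact ⟨σ.subtypePerm hmaps, ofSubtype_subtypePerm hmaps fun i hi => hσ hi⟩

theorem finite_setOf_conj_of_finite_orbits (H : Subgroup (Perm α)) {x : Perm α}
    (hx : {i | x i ≠ i}.Finite)
    (horb : ∀ a, x a ≠ a → {b | ∃ h ∈ H, h a = b}.Finite) :
    {y | ∃ h ∈ H, h * x * h⁻¹ = y}.Finite := by
  have hT : (⋃ a ∈ {i | x i ≠ i}, {b | ∃ h ∈ H, h a = b}).Finite :=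
    hx.biUnion fun a ha => horb a ha
  refine (finite_setOf_apply_ne_subset hT).subset ?_
  rintro _ ⟨h, hh, rfl⟩
  rw [Set.mem_ofPred_eq, setOf_conj_apply_ne]
  rintro _ ⟨a, ha, rfl⟩
  exact Set.mem_biUnion ha ⟨h, hh, rfl⟩

end Equiv.Perm

/-- Let `H` be a subgroup of the group of all permutations of `ℕ` such that every element of
`H` has finite support and every orbit of the natural action of `H` on `ℕ` is finite.
Then every element `x ∈ H` has a finite conjugacy class in `H`, i.e. `H` is an FC-group. -/
theorem stmt_8 (H : Subgroup (Equiv.Perm ℕ))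
    (hsupp : ∀ x ∈ H, {i : ℕ | x i ≠ i}.Finite)
    (horb : ∀ a : ℕ, {b : ℕ | ∃ h ∈ H, h a = b}.Finite) :
    ∀ x ∈ H, {y : Equiv.Perm ℕ | ∃ h ∈ H, h * x * h⁻¹ = y}.Finite := fun x hx =>
  Equiv.Perm.finite_setOf_conj_of_finite_orbits H (hsupp x hx) fun a _ => horb a
end

section
/- Let L be a first-order language with finitely many function and constant symbols and no relation symbols besides equality, let G be an L-structure with named generators (G is generated by d elements that are named by constant symbols c₁,…,c_d of L), and let G̃ be the reduct of G to the language L̃ obtained from L by omitting the constants c₁,…,c_d. Then for every r ≥ 1 the following are equivalent: (i) G̃ is Π_{r+1}-pseudofinite; (ii) G is Π_{r+1}-pseudofinite; (iii) G is Σ_r-pseudofinite. -/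
/-!
Naming `c₁, …, c_d` changes nothing at the `Π_{r+1}` level: a `Π_{r+1}` sentence `φ(c̄)` holds in
every finite structure iff its universal closure `∀ x̄, φ(x̄)`, again a `Π_{r+1}` sentence, holds
in every finite structure, and in `G` the closure holds iff `φ(c̄)` holds for every interpretation
of the constants, in particular for the named generators. Since `Σ_r ⊆ Π_{r+1}` it remains to go
up from `Σ_r` to `Π_{r+1}`. Because the constants generate `G`, every tuple `ā` of `G` is the
value of a tuple `t̄` of closed terms. If `∀ x̄, ψ(x̄)` with `ψ` in `Σ_r` holds in every finite
structure, so does the `Σ_r` sentence `ψ(t̄)`; hence `ψ(t̄)`, that is `ψ(ā)`, holds in `G`.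
-/

open FirstOrder Language

namespace Stmt11

variable {L : FirstOrder.Language}

/-- Prefixing a bounded formula with a block of `m` existential quantifiers. -/
def exsN {α : Type*} : ∀ (m : ℕ) {n : ℕ}, L.BoundedFormula α (n + m) → L.BoundedFormula α n
  | 0, _, φ => φ
  | m + 1, _, φ => exsN m φ.ex

/-- Prefixing a bounded formula with a block of `m` universal quantifiers. -/
def allsN {α : Type*} : ∀ (m : ℕ) {n : ℕ}, L.BoundedFormula α (n + m) → L.BoundedFormula α n
  | 0, _, φ => φ
  | m + 1, _, φ => allsN m φ.all

/-- The `Σ_r`/`Π_r` hierarchy of formulas: `IsSigmaPi L r true φ` means `φ` is `Σ_r`,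
`IsSigmaPi L r false φ` means `φ` is `Π_r`.  At level `0` both classes are the
quantifier-free formulas; a `Σ_{r+1}` formula is a block of existential quantifiers applied
to a `Π_r` formula, and a `Π_{r+1}` formula is a block of universal quantifiers applied to
a `Σ_r` formula. -/
def IsSigmaPi (L : FirstOrder.Language) : ℕ → Bool → ∀ {n : ℕ}, L.BoundedFormula Empty n → Prop
  | 0, _, _, φ => φ.IsQF
  | r + 1, true, n, φ =>
      ∃ (m : ℕ) (ψ : L.BoundedFormula Empty (n + m)), IsSigmaPi L r false ψ ∧ φ = exsN m ψ
  | r + 1, false, n, φ =>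
      ∃ (m : ℕ) (ψ : L.BoundedFormula Empty (n + m)), IsSigmaPi L r true ψ ∧ φ = allsN m ψ

/-- `φ` holds in `M` when `M` carries the `L`-structure `S`. -/
def SentenceHoldsIn (L : FirstOrder.Language) (M : Type*) (S : L.Structure M)
    (φ : L.Sentence) : Prop :=
  letI := S
  M ⊨ φ

/-- `PseudofiniteAt L r b M S` says: every `Σ_r` sentence (if `b = true`), resp. `Π_r`
sentence (if `b = false`), that holds in every finite nonempty `L`-structure holds in `M`. -/
def PseudofiniteAt (L : FirstOrder.Language) (r : ℕ) (b : Bool) (M : Type*)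
    (S : L.Structure M) : Prop :=
  ∀ φ : L.Sentence, IsSigmaPi L r b φ →
    (∀ (E : Type) (SE : L.Structure E), Nonempty E → Finite E → SentenceHoldsIn L E SE φ) →
    SentenceHoldsIn L M S φ

/-- The expansion of an `L`-structure on `M` to `L[[Fin d]]` interpreting the new constants
`c₁, …, c_d` by the given map `c : Fin d → M`. -/
noncomputable def constStruct (L : FirstOrder.Language) {M : Type*} (S : L.Structure M)
    {d : ℕ} (c : Fin d → M) : (L[[Fin d]]).Structure M :=
  letI := S
  letI := constantsOn.structure c
  inferInstance

open BoundedFormula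

def castIdx {n n' : ℕ} (h : n = n') (φ : L.BoundedFormula Empty n) :
    L.BoundedFormula Empty n' :=
  h ▸ φ

theorem castIdx_ex {n n' : ℕ} (h : n = n') (h' : n + 1 = n' + 1)
    (φ : L.BoundedFormula Empty (n + 1)) : (castIdx h' φ).ex = castIdx h φ.ex := by
  subst h; rfl

theorem castIdx_all {n n' : ℕ} (h : n = n') (h' : n + 1 = n' + 1)
    (φ : L.BoundedFormula Empty (n + 1)) : (castIdx h' φ).all = castIdx h φ.all := by
  subst h; rfl

theorem ex_exsN : ∀ (m : ℕ) {n : ℕ} (ψ : L.BoundedFormula Empty (n + 1 + m)),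
    (exsN m ψ).ex = exsN (m + 1) (castIdx (Nat.succ_add n m) ψ)
  | 0, _, _ => rfl
  | m + 1, n, ψ => by
    rw [exsN, ex_exsN m ψ.ex, ← castIdx_ex (Nat.succ_add n m)]
    rfl

theorem all_allsN : ∀ (m : ℕ) {n : ℕ} (ψ : L.BoundedFormula Empty (n + 1 + m)),
    (allsN m ψ).all = allsN (m + 1) (castIdx (Nat.succ_add n m) ψ)
  | 0, _, _ => rfl
  | m + 1, n, ψ => by
    rw [allsN, all_allsN m ψ.all, ← castIdx_all (Nat.succ_add n m)]
    rfl

theorem isSigmaPi_castIdx {r : ℕ} {b : Bool} {n n' : ℕ} (h : n = n')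
    {φ : L.BoundedFormula Empty n} (hφ : IsSigmaPi L r b φ) : IsSigmaPi L r b (castIdx h φ) := by
  subst h; exact hφ

namespace IsSigmaPi

theorem succ {r : ℕ} {b : Bool} {n : ℕ} {φ : L.BoundedFormula Empty n}
    (h : IsSigmaPi L r (!b) φ) : IsSigmaPi L (r + 1) b φ := by
  cases b
  exacts [⟨0, φ, h, rfl⟩, ⟨0, φ, h, rfl⟩]

theorem ex {r n : ℕ} {φ : L.BoundedFormula Empty (n + 1)}
    (h : IsSigmaPi L (r + 1) true φ) : IsSigmaPi L (r + 1) true φ.ex := by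
  obtain ⟨m, ψ, hψ, rfl⟩ := h
  exact ⟨m + 1, _, isSigmaPi_castIdx _ hψ, ex_exsN m ψ⟩

theorem all {r n : ℕ} {φ : L.BoundedFormula Empty (n + 1)}
    (h : IsSigmaPi L (r + 1) false φ) : IsSigmaPi L (r + 1) false φ.all := by
  obtain ⟨m, ψ, hψ, rfl⟩ := h
  exact ⟨m + 1, _, isSigmaPi_castIdx _ hψ, all_allsN m ψ⟩

theorem alls {r : ℕ} : ∀ {n : ℕ} {φ : L.BoundedFormula Empty n},
    IsSigmaPi L (r + 1) false φ → IsSigmaPi L (r + 1) false φ.alls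
  | 0, _, h => h
  | _ + 1, φ, h => alls (φ := φ.all) h.all

theorem induction_on {P : ℕ → Bool → ∀ n, L.BoundedFormula Empty n → Prop}
    (qf : ∀ b n (φ : L.BoundedFormula Empty n), φ.IsQF → P 0 b n φ)
    (succ : ∀ r b n φ, P r (!b) n φ → P (r + 1) b n φ)
    (ex : ∀ r n (φ : L.BoundedFormula Empty (n + 1)), P (r + 1) true (n + 1) φ →
      P (r + 1) true n φ.ex)
    (all : ∀ r n (φ : L.BoundedFormula Empty (n + 1)), P (r + 1) false (n + 1) φ →
      P (r + 1) false n φ.all) :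
    ∀ {r : ℕ} {b : Bool} {n : ℕ} {φ : L.BoundedFormula Empty n}, IsSigmaPi L r b φ → P r b n φ
  | 0, _, _, _, h => qf _ _ _ h
  | r + 1, true, _, _, ⟨m, ψ, hψ, rfl⟩ => by
    have exsN_mem : ∀ m n (ψ : L.BoundedFormula Empty (n + m)),
        P (r + 1) true (n + m) ψ → P (r + 1) true n (exsN m ψ) := by
      intro m
      induction m with
      | zero => exact fun _ _ h => h
      | succ m ih => exact fun n ψ h => ih n ψ.ex (ex r _ ψ h)
    exact exsN_mem m _ ψ (succ r true _ ψ (induction_on qf succ ex all hψ))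
  | r + 1, false, _, _, ⟨m, ψ, hψ, rfl⟩ => by
    have allsN_mem : ∀ m n (ψ : L.BoundedFormula Empty (n + m)),
        P (r + 1) false (n + m) ψ → P (r + 1) false n (allsN m ψ) := by
      intro m
      induction m with
      | zero => exact fun _ _ h => h
      | succ m ih => exact fun n ψ h => ih n ψ.all (all r _ ψ h)
    exact allsN_mem m _ ψ (succ r false _ ψ (induction_on qf succ ex all hψ))

end IsSigmaPi

theorem realize_allsN {M : Type*} [L.Structure M] (v : Empty → M) :
    ∀ (m : ℕ) {n : ℕ} (φ : L.BoundedFormula Empty (n + m)) (xs : Fin n → M),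
      (allsN m φ).Realize v xs ↔ ∀ a : Fin m → M, φ.Realize v (Fin.append xs a)
  | 0, _, φ, xs => by simp [allsN, Fin.append_right_nil]
  | m + 1, _, φ, xs => by
    simp only [allsN, realize_allsN v m, realize_all, ← Fin.append_snoc]
    exact ⟨fun h a => Fin.snoc_init_self a ▸ h _ _, fun h _ _ => h _⟩

theorem isQF_onBoundedFormula {L' : FirstOrder.Language} (ϕ : L →ᴸ L') {α : Type*} {n : ℕ}
    {φ : L.BoundedFormula α n} (hφ : φ.IsQF) : (ϕ.onBoundedFormula φ).IsQF := by
  induction hφ with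
  | falsum => exact isQF_bot
  | of_isAtomic hat =>
    cases hat
    exacts [(IsAtomic.equal _ _).isQF, (IsAtomic.rel _ _).isQF]
  | imp _ _ ih₁ ih₂ => exact ih₁.imp ih₂

theorem isSigmaPi_onBoundedFormula {L' : FirstOrder.Language} (ϕ : L →ᴸ L') {r : ℕ} {b : Bool}
    {n : ℕ} {φ : L.BoundedFormula Empty n} (hφ : IsSigmaPi L r b φ) :
    IsSigmaPi L' r b (ϕ.onBoundedFormula φ) :=
  IsSigmaPi.induction_on (P := fun r b _ φ => IsSigmaPi L' r b (ϕ.onBoundedFormula φ))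
    (fun _ _ _ => isQF_onBoundedFormula ϕ) (fun _ _ _ _ => IsSigmaPi.succ)
    (fun _ _ _ => IsSigmaPi.ex) (fun _ _ _ => IsSigmaPi.all) hφ

theorem isQF_mapTermRel {L' : FirstOrder.Language} {α β : Type*} {g : ℕ → ℕ}
    {ft : ∀ n, L.Term (α ⊕ Fin n) → L'.Term (β ⊕ Fin (g n))}
    {fr : ∀ n, L.Relations n → L'.Relations n}
    {h : ∀ n, L'.BoundedFormula β (g (n + 1)) → L'.BoundedFormula β (g n + 1)} {n : ℕ}
    {φ : L.BoundedFormula α n} (hφ : φ.IsQF) : (φ.mapTermRel ft fr h).IsQF := by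
  induction hφ with
  | falsum => exact isQF_bot
  | of_isAtomic hat =>
    cases hat
    exacts [(IsAtomic.equal _ _).isQF, (IsAtomic.rel _ _).isQF]
  | imp _ _ ih₁ ih₂ => exact ih₁.imp ih₂

section Constants

variable {d : ℕ}

instance isExpansionOn_constStruct {M : Type*} [S : L.Structure M] (c : Fin d → M) :
    @LHom.IsExpansionOn _ _ (L.lhomWithConstants (Fin d)) M S (constStruct L S c) := by
  unfold constStruct; infer_instance

def constantsToBoundedVars {n : ℕ} (φ : L[[Fin d]].BoundedFormula Empty n) :
    L.BoundedFormula Empty (d + n) :=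
  (BoundedFormula.constantsVarsEquiv φ).relabel Sum.swap

theorem realize_constantsToBoundedVars {M : Type*} [S : L.Structure M] {n : ℕ}
    (φ : L[[Fin d]].BoundedFormula Empty n) (v : Empty → M) (xs : Fin (d + n) → M) :
    (constantsToBoundedVars φ).Realize v xs ↔
      (letI := constStruct L S (xs ∘ Fin.castAdd n); φ.Realize v (xs ∘ Fin.natAdd d)) := by
  let := constStruct L S (xs ∘ Fin.castAdd n)
  rw [constantsToBoundedVars, realize_relabel, Sum.elim_swap, ← realize_constantsVarsEquiv]
  rfl

theorem sentenceHoldsIn_alls_constantsToBoundedVars {M : Type*} (S : L.Structure M)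
    (φ : L[[Fin d]].Sentence) :
    SentenceHoldsIn L M S (constantsToBoundedVars φ).alls ↔
      ∀ c : Fin d → M, SentenceHoldsIn L[[Fin d]] M (constStruct L S c) φ := by
  let := S
  simp only [SentenceHoldsIn, Sentence.Realize, realize_alls, realize_constantsToBoundedVars]
  refine forall_congr' fun c => ?_
  rw [Subsingleton.elim (c ∘ Fin.natAdd d) default]
  rfl

theorem isSigmaPi_constantsToBoundedVars {r : ℕ} {b : Bool} {n : ℕ}
    {φ : L[[Fin d]].BoundedFormula Empty n} (hφ : IsSigmaPi L[[Fin d]] r b φ) :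
    IsSigmaPi L r b (constantsToBoundedVars φ) := by
  refine IsSigmaPi.induction_on (P := fun r b _ φ => IsSigmaPi L r b (constantsToBoundedVars φ))
    (fun _ _ _ hφ => (isQF_mapTermRel hφ).relabel _) (fun _ _ _ _ => IsSigmaPi.succ) ?_ ?_ hφ
  · intro r n φ h
    have hex : constantsToBoundedVars φ.ex = (constantsToBoundedVars φ).ex := relabel_ex _ _
    exact hex ▸ h.ex
  · intro r n φ h
    have hall : constantsToBoundedVars φ.all = (constantsToBoundedVars φ).all := relabel_all _ _
    exact hall ▸ h.all

end Constants

section Substitution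

variable {m : ℕ} (σ : Fin m → L.Term Empty)

def substFirstTerm {n : ℕ} (t : L.Term (Empty ⊕ Fin (m + n))) : L.Term (Empty ⊕ Fin n) :=
  t.subst (Sum.elim Empty.elim
    (Fin.append (fun j => (σ j).relabel Sum.inl) (fun k => Term.var (Sum.inr k))))

/-- Substitutes the closed terms `σ` for the first `m` bound variables. Taking the index `j`
together with an equation `j = m + n`, rather than the index `m + n` itself, lets the definition
recurse structurally on the formula. -/
def substFirst : ∀ {j : ℕ}, L.BoundedFormula Empty j → ∀ {n : ℕ}, j = m + n →
    L.BoundedFormula Empty n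
  | _, .falsum, _, _ => .falsum
  | _, .equal t₁ t₂, _, h => .equal (substFirstTerm σ (h ▸ t₁)) (substFirstTerm σ (h ▸ t₂))
  | _, .rel R ts, _, h => .rel R fun i => substFirstTerm σ (h ▸ ts i)
  | _, .imp φ₁ φ₂, _, h => (substFirst φ₁ h).imp (substFirst φ₂ h)
  | _, .all φ, n, h => (substFirst φ (n := n + 1) (congrArg Nat.succ h)).all

variable {σ}

theorem realize_substFirstTerm {M : Type*} [L.Structure M] {n : ℕ}
    (t : L.Term (Empty ⊕ Fin (m + n))) (v : Empty → M) (xs : Fin n → M) :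
    (substFirstTerm σ t).realize (Sum.elim v xs) =
      t.realize (Sum.elim v (Fin.append (fun j => (σ j).realize v) xs)) := by
  rw [substFirstTerm, Term.realize_subst]
  congr 1
  funext x
  rcases x with e | i
  · exact e.elim
  · refine Fin.addCases (fun j => ?_) (fun k => ?_) i
    · simp only [Sum.elim_inr, Fin.append_left, Term.realize_relabel]
      exact congrArg (Term.realize · (σ j)) (funext fun e => e.elim)
    · simp only [Sum.elim_inr, Fin.append_right, Term.realize_var]

theorem realize_substFirst {M : Type*} [L.Structure M] (v : Empty → M) {j : ℕ}
    (φ : L.BoundedFormula Empty j) {n : ℕ} (h : j = m + n) (xs : Fin n → M) :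
    (substFirst σ φ h).Realize v xs ↔
      φ.Realize v (Fin.append (fun j => (σ j).realize v) xs ∘ Fin.cast h) := by
  induction φ generalizing n with
  | falsum => rfl
  | equal t₁ t₂ =>
    subst h
    simp only [substFirst, BoundedFormula.Realize, realize_substFirstTerm]
    rfl
  | rel R ts =>
    subst h
    simp only [substFirst, BoundedFormula.Realize, realize_substFirstTerm]
    rfl
  | imp φ₁ φ₂ ih₁ ih₂ => exact imp_congr (ih₁ h xs) (ih₂ h xs)
  | all φ ih =>
    subst h
    refine forall_congr' fun x => ?_
    rw [ih, Fin.append_snoc]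
    rfl

theorem realize_substFirst_zero_add {M : Type*} [L.Structure M] (v : Empty → M)
    (φ : L.BoundedFormula Empty (0 + m)) :
    (substFirst σ φ (Nat.add_comm 0 m)).Realize v default ↔
      φ.Realize v (Fin.append default fun j => (σ j).realize v) := by
  rw [realize_substFirst]
  congr!
  ext i
  simp [Fin.append_left_nil, Fin.append_right_nil]

theorem isQF_substFirst {j : ℕ} {φ : L.BoundedFormula Empty j} (hφ : φ.IsQF) {n : ℕ}
    (h : j = m + n) : (substFirst σ φ h).IsQF := by
  subst h
  induction hφ with
  | falsum => exact isQF_bot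
  | of_isAtomic hat =>
    cases hat
    exacts [(IsAtomic.equal _ _).isQF, (IsAtomic.rel _ _).isQF]
  | imp _ _ ih₁ ih₂ => exact ih₁.imp ih₂

theorem isSigmaPi_substFirst {r : ℕ} {b : Bool} {j : ℕ} {φ : L.BoundedFormula Empty j}
    (hφ : IsSigmaPi L r b φ) {n : ℕ} (h : j = m + n) : IsSigmaPi L r b (substFirst σ φ h) := by
  refine IsSigmaPi.induction_on
    (P := fun r b j φ => ∀ n (h : j = m + n), IsSigmaPi L r b (substFirst σ φ h))
    ?_ ?_ ?_ ?_ hφ n h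
  · exact fun _ _ _ hφ _ h => isQF_substFirst hφ h
  · exact fun _ _ _ _ ih n h => (ih n h).succ
  · rintro r _ φ ih n rfl
    exact (ih (n + 1) rfl).ex
  · rintro r _ φ ih n rfl
    exact (ih (n + 1) rfl).all

end Substitution

namespace PseudofiniteAt

variable {r : ℕ} {M : Type*}

theorem of_succ {b : Bool} {S : L.Structure M} (h : PseudofiniteAt L (r + 1) b M S) :
    PseudofiniteAt L r (!b) M S := fun φ hφ =>
  h φ hφ.succ

theorem of_expansion {L' : FirstOrder.Language} (ϕ : L →ᴸ L') {b : Bool} [S : L.Structure M]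
    [S' : L'.Structure M] [ϕ.IsExpansionOn M] (h : PseudofiniteAt L' r b M S') :
    PseudofiniteAt L r b M S := by
  intro φ hφ hfin
  refine (LHom.realize_onSentence M ϕ φ).mp (h _ (isSigmaPi_onBoundedFormula ϕ hφ) ?_)
  intro E SE hne hE
  let : L.Structure E := ϕ.reduct E
  have := ϕ.isExpansionOn_reduct E
  exact (LHom.realize_onSentence E ϕ φ).mpr (hfin E _ hne hE)

theorem withConstants {S : L.Structure M} (h : PseudofiniteAt L (r + 1) false M S) {d : ℕ}
    (c : Fin d → M) : PseudofiniteAt L[[Fin d]] (r + 1) false M (constStruct L S c) := by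
  intro φ hφ hfin
  refine (sentenceHoldsIn_alls_constantsToBoundedVars S φ).mp (h _ ?_ ?_) c
  · exact (isSigmaPi_constantsToBoundedVars hφ).alls
  · exact fun E SE hne hE => (sentenceHoldsIn_alls_constantsToBoundedVars SE φ).mpr
      fun w => hfin E _ hne hE

theorem succ_of_forall_exists_term {S : L.Structure M}
    (hM : ∀ a : M, ∃ t : L.Term Empty, (letI := S; t.realize default) = a)
    (h : PseudofiniteAt L r true M S) : PseudofiniteAt L (r + 1) false M S := by
  rintro _ ⟨m, ψ, hψ, rfl⟩ hfin
  let := S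
  refine (realize_allsN default m ψ default).mpr fun a => ?_
  choose σ hσ using fun j => hM (a j)
  have hsub := h (substFirst σ ψ (Nat.add_comm 0 m)) (isSigmaPi_substFirst hψ _)
    fun E SE hne hE => (realize_substFirst_zero_add _ ψ).mpr
      ((realize_allsN default m ψ default).mp (hfin E SE hne hE) _)
  rwa [SentenceHoldsIn, Sentence.Realize, Formula.Realize, realize_substFirst_zero_add,
    funext hσ] at hsub

end PseudofiniteAt

theorem exists_term_realize_eq_of_closure_eq_top {M : Type*} [S : L.Structure M] {d : ℕ}
    {c : Fin d → M} (hgen : Substructure.closure L (Set.range c) = ⊤) (a : M) :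
    ∃ t : L[[Fin d]].Term Empty, (letI := constStruct L S c; t.realize default) = a := by
  let := constStruct L S c
  obtain ⟨t, rfl⟩ := Substructure.mem_closure_iff_exists_term.mp (hgen ▸ Substructure.mem_top a)
  choose f hf using fun x : Set.range c => x.2
  refine ⟨(t.relabel (Sum.inl ∘ f)).varsToConstants, ?_⟩
  rw [Term.realize_varsToConstants, Term.realize_relabel]
  congr 1
  funext x
  exact hf x

theorem stmt_11_general (L : FirstOrder.Language)
    (G : Type) [SG : L.Structure G] (d : ℕ) (c : Fin d → G)
    (hgen : Substructure.closure L (Set.range c) = ⊤)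
    (r : ℕ) :
    List.TFAE
      [PseudofiniteAt L (r + 1) false G SG,
       PseudofiniteAt (L[[Fin d]]) (r + 1) false G (constStruct L SG c),
       PseudofiniteAt (L[[Fin d]]) r true G (constStruct L SG c)] := by
  let := constStruct L SG c
  tfae_have 1 → 2 := fun h => h.withConstants c
  tfae_have 2 → 1 := PseudofiniteAt.of_expansion (L.lhomWithConstants (Fin d))
  tfae_have 2 → 3 := PseudofiniteAt.of_succ
  tfae_have 3 → 2 :=
    PseudofiniteAt.succ_of_forall_exists_term (exists_term_realize_eq_of_closure_eq_top hgen)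
  tfae_finish

/-- Let `L` be a language with finitely many function and constant symbols and no relation
symbols, and let `G` be an `L[[Fin d]]`-structure with named generators: the constants
`c : Fin d → G` generate `G` as an `L`-structure.  Let `G̃` be the reduct of `G` to `L`.
Then for every `r ≥ 1` the following are equivalent: (i) `G̃` is `Π_{r+1}`-pseudofinite;
(ii) `G` is `Π_{r+1}`-pseudofinite; (iii) `G` is `Σ_r`-pseudofinite. -/
theorem stmt_11 (L : FirstOrder.Language) (hrel : ∀ n, IsEmpty (L.Relations n))
    (hfun : Finite (Σ n, L.Functions n))
    (G : Type) [SG : L.Structure G] (d : ℕ) (c : Fin d → G)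
    (hgen : Substructure.closure L (Set.range c) = ⊤)
    (r : ℕ) (hr : 1 ≤ r) :
    List.TFAE
      [PseudofiniteAt L (r + 1) false G SG,
       PseudofiniteAt (L[[Fin d]]) (r + 1) false G (constStruct L SG c),
       PseudofiniteAt (L[[Fin d]]) r true G (constStruct L SG c)] :=
  stmt_11_general L G (SG := SG) d c hgen r

end Stmt11
end

section
/- Let L be a first-order language with finitely many function and constant symbols and no relation symbols besides equality, and let G be an L-structure with named generators (G is generated by d elements named by constant symbols c₁,…,c_d of L) that is Σ₁-pseudofinite. Then there exist finite L-structures (E_n)_{n∈ℕ}, a nonprincipal ultrafilter 𝒰 on ℕ, and an injective homomorphism (L-embedding) β from G into the ultraproduct E = ∏_n E_n/𝒰 such that β preserves satisfaction of Σ₁-formulas in both directions: for all p₁,…,p_k ∈ G and each quantifier-free L-formula θ(x₁,…,x_k, ȳ), G ⊨ ∃ȳ θ(p₁,…,p_k, ȳ) if and only if E ⊨ ∃ȳ θ(β(p₁),…,β(p_k), ȳ). -/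
/-!
Enumerate the universal sentences true in `G`; there are countably many since `L` is
countable. Finitely many of them combine into a single universal sentence, which by
`Σ₁`-pseudofiniteness has a finite model `E n`; so `E n` can be chosen to satisfy the first `n`
of them, and by Łoś every universal sentence true in `G` holds in the ultraproduct `E`.
As `G` is generated by constants, each `g : G` is the value of a closed term `τ g`, and sending
`g` to the value of `τ g` in `E` is an embedding, since quantifier-free sentences transfer in
both directions. `Σ₁` formulas go up along any embedding; they come down because if
`∃ ȳ, θ(p, ȳ)` fails in `G` then `∀ ȳ, ¬ θ(τ p, ȳ)` is a universal sentence true in `G`.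
-/

open FirstOrder Language

namespace Stmt13

/-- `φ` holds in `M` when `M` carries the `L`-structure `S`. -/
def SentenceHoldsIn (L : FirstOrder.Language) (M : Type*) (S : L.Structure M)
    (φ : L.Sentence) : Prop :=
  letI := S
  M ⊨ φ

/-- `φ` is realized by the valuation `v` in `M` carrying the `L`-structure `S`. -/
def RealizeWith (L : FirstOrder.Language) {M : Type*} (S : L.Structure M) {α : Type*}
    (φ : L.Formula α) (v : α → M) : Prop :=
  letI := S
  φ.Realize v

/-- `G` is `Σ₁`-pseudofinite: every existential closure of a quantifier-free formula that
holds in every finite nonempty `L`-structure holds in `G`. -/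
def SigmaOnePseudofinite (L : FirstOrder.Language) (M : Type*) (S : L.Structure M) : Prop :=
  ∀ (m : ℕ) (θ : L.BoundedFormula Empty m), θ.IsQF →
    (∀ (E : Type) (SE : L.Structure E), Nonempty E → Finite E →
      SentenceHoldsIn L E SE θ.exs) →
    SentenceHoldsIn L M S θ.exs

/-- The `L`-structure on the ultraproduct `∏ E n / 𝒰`. -/
noncomputable def ultraStruct (L : FirstOrder.Language) (E : ℕ → Type) (SE : ∀ n, L.Structure (E n))
    (𝒰 : Ultrafilter ℕ) : L.Structure ((𝒰 : Filter ℕ).Product E) :=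
  letI := SE
  inferInstance

end Stmt13

open Filter Substructure

universe u

namespace FirstOrder.Language

variable {L : FirstOrder.Language}

namespace BoundedFormula

variable {α : Type*}

theorem IsQF.subst {β : Type*} {n : ℕ} {φ : L.BoundedFormula α n} (hφ : φ.IsQF)
    (f : α → L.Term β) : (φ.subst f).IsQF := by
  induction hφ with
  | falsum => exact isQF_bot
  | of_isAtomic ha =>
    cases ha with
    | equal t₁ t₂ => exact (IsAtomic.equal _ _).isQF
    | rel R ts => exact (IsAtomic.rel _ _).isQF
  | imp _ _ ih₁ ih₂ => exact ih₁.imp ih₂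

theorem realize_castLE_of_isQF {M : Type*} [L.Structure M] {m n : ℕ} (h : m ≤ n)
    {φ : L.BoundedFormula α m} (hφ : φ.IsQF) (v : α → M) (xs : Fin n → M) :
    (φ.castLE h).Realize v xs ↔ φ.Realize v (xs ∘ Fin.castLE h) := by
  have hv : Sum.elim v xs ∘ Sum.map id (Fin.castLE h) = Sum.elim v (xs ∘ Fin.castLE h) := by
    ext (a | i) <;> rfl
  induction hφ with
  | falsum => rfl
  | of_isAtomic ha =>
    cases ha with
    | equal t₁ t₂ => simp only [Term.bdEqual, castLE, Realize, Term.realize_relabel, hv]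
    | rel R ts =>
      simp only [Relations.boundedFormula, castLE, Realize, Function.comp_apply,
        Term.realize_relabel, hv]
  | imp _ _ ih₁ ih₂ => simp only [castLE, realize_imp, ih₁, ih₂]

end BoundedFormula

open BoundedFormula

/-- A pair `⟨m, θ⟩` stands for the universal sentence `∀ x₁ … xₘ, θ`. -/
def piOneTheory (L : FirstOrder.Language) (M : Type*) [L.Structure M] :
    Set (Σ m, L.BoundedFormula Empty m) :=
  {φ | φ.2.IsQF ∧ M ⊨ φ.2.alls}

def infCast (φ ψ : Σ m, L.BoundedFormula Empty m) : Σ m, L.BoundedFormula Empty m :=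
  ⟨max φ.1 ψ.1, φ.2.castLE (le_max_left _ _) ⊓ ψ.2.castLE (le_max_right _ _)⟩

section Universal

variable {M : Type*} [L.Structure M]

theorem infCast_mem_piOneTheory_iff [Nonempty M] {φ ψ : Σ m, L.BoundedFormula Empty m}
    (hφ : φ.2.IsQF) (hψ : ψ.2.IsQF) :
    infCast φ ψ ∈ piOneTheory L M ↔ φ ∈ piOneTheory L M ∧ ψ ∈ piOneTheory L M := by
  obtain ⟨y₀⟩ := ‹Nonempty M›
  let extend {k : ℕ} (ys : Fin k → M) (j : Fin (max φ.1 ψ.1)) : M :=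
    if hj : (j : ℕ) < k then ys ⟨j, hj⟩ else y₀
  have extend_comp {k : ℕ} (hk : k ≤ max φ.1 ψ.1) (ys : Fin k → M) :
      extend ys ∘ Fin.castLE hk = ys := funext fun j => by simp [extend, j.isLt]
  simp only [piOneTheory, infCast, Set.mem_ofPred_eq, Sentence.Realize, realize_alls,
    realize_inf, realize_castLE_of_isQF _ hφ, realize_castLE_of_isQF _ hψ,
    hφ.castLE.inf hψ.castLE, hφ, hψ, true_and]
  refine ⟨fun h => ⟨fun ys => ?_, fun ys => ?_⟩, fun h xs => ⟨h.1 _, h.2 _⟩⟩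
  · simpa only [extend_comp] using (h (extend ys)).1
  · simpa only [extend_comp] using (h (extend ys)).2

theorem exists_mem_piOneTheory_forall_subset [Nonempty M]
    (s : Finset (Σ m, L.BoundedFormula Empty m)) (hs : ↑s ⊆ piOneTheory L M) :
    ∃ φ ∈ piOneTheory L M, ∀ (N : Type u) [L.Structure N] [Nonempty N],
      φ ∈ piOneTheory L N → ↑s ⊆ piOneTheory L N := by
  classical
  induction s using Finset.induction_on with
  | empty =>
    exact ⟨⟨0, ⊤⟩, ⟨IsQF.top, Sentence.realize_top M⟩, fun _ _ _ _ => by simp⟩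
  | insert ψ s _ ih =>
    rw [Finset.coe_insert, Set.insert_subset_iff] at hs
    obtain ⟨φ, hφ, hφs⟩ := ih hs.2
    refine ⟨infCast ψ φ, (infCast_mem_piOneTheory_iff hs.1.1 hφ.1).2 ⟨hs.1, hφ⟩, ?_⟩
    intro N _ _ h
    rw [infCast_mem_piOneTheory_iff hs.1.1 hφ.1] at h
    rw [Finset.coe_insert, Set.insert_subset_iff]
    exact ⟨h.1, hφs N h.2⟩

end Universal

section Transfer

variable {G N : Type*} [L.Structure G] [L.Structure N]

theorem realize_sentence_iff_of_piOneTheory_subset (hN : piOneTheory L G ⊆ piOneTheory L N)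
    {φ : L.Sentence} (hφ : φ.IsQF) : G ⊨ φ ↔ N ⊨ φ := by
  refine ⟨fun h => (hN (a := ⟨0, φ⟩) ⟨hφ, h⟩).2, fun h => by_contra fun hn => ?_⟩
  have hnot : (⟨0, φ.not⟩ : Σ m, L.BoundedFormula Empty m) ∈ piOneTheory L G :=
    ⟨hφ.not, (Sentence.realize_not G).2 hn⟩
  exact (Sentence.realize_not N).1 (hN hnot).2 h

theorem surjective_realize_of_closure_range_constants_eq_top {ι : Type*} (c : ι → L.Constants)
    (hc : closure L (Set.range fun i => (c i : G)) = ⊤) :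
    Function.Surjective (Term.realize (L := L) (default : Empty → G)) := by
  intro g
  obtain ⟨t, ht⟩ := mem_closure_iff_exists_term.1 (hc ▸ mem_top g)
  refine ⟨t.subst fun x => (c x.2.choose).term, ?_⟩
  rw [Term.realize_subst, ← ht]
  congr 1
  funext x
  rw [Term.realize_constants]
  exact x.2.choose_spec

theorem exists_embedding_realize_exs_iff
    (hG : Function.Surjective (Term.realize (L := L) (default : Empty → G)))
    (hN : piOneTheory L G ⊆ piOneTheory L N) :
    ∃ β : G ↪[L] N, ∀ {k m : ℕ} (θ : L.BoundedFormula (Fin k) m), θ.IsQF →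
      ∀ p : Fin k → G, (θ.exs.Realize p ↔ θ.exs.Realize (β ∘ p)) := by
  set τ := Function.surjInv hG
  have hτ : ∀ g, (τ g).realize default = g := Function.surjInv_eq hG
  have realize_eq_iff (t s : L.Term Empty) :
      t.realize (default : Empty → G) = s.realize default ↔
        t.realize (default : Empty → N) = s.realize default := by
    simpa only [Sentence.Realize, Formula.realize_equal] using
      realize_sentence_iff_of_piOneTheory_subset hN (IsAtomic.equal _ _).isQF (φ := t.equal s)
  set f : G → N := fun g => (τ g).realize default
  have f_realize (t : L.Term Empty) : f (t.realize default) = t.realize default :=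
    (realize_eq_iff _ _).1 (hτ _)
  have funMap_eq_realize {n : ℕ} (F : L.Functions n) (x : Fin n → G) :
      Structure.funMap F x = (Term.func F fun i => τ (x i)).realize default := by
    simp only [Term.realize_func, hτ]
  let β : G ↪[L] N :=
    { toFun := f
      inj' := fun g g' h => by simpa only [hτ] using (realize_eq_iff (τ g) (τ g')).2 h
      map_fun' := fun F x => by rw [funMap_eq_realize, f_realize, Term.realize_func]; rfl
      map_rel' := fun R x => by
        simpa only [Sentence.Realize, Formula.realize_rel, hτ, Function.comp_def, f] using
          (realize_sentence_iff_of_piOneTheory_subset hN (IsAtomic.rel _ _).isQF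
            (φ := R.formula fun i => τ (x i))).symm }
  refine ⟨β, fun {k m} θ hθ p => ⟨fun h => ?_, fun h => by_contra fun hc => ?_⟩⟩
  · obtain ⟨xs, hxs⟩ := realize_exs.1 h
    exact realize_exs.2 ⟨β ∘ xs, (hθ.realize_embedding β).2 hxs⟩
  · -- `∀ ȳ, ¬ θ(τ p, ȳ)` is a universal sentence true in `G`, hence in `N`
    have hmem : (⟨m, (θ.subst (τ ∘ p)).not⟩ : Σ m, L.BoundedFormula Empty m) ∈
        piOneTheory L G := by
      refine ⟨(hθ.subst _).not, realize_alls.2 fun ys => ?_⟩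
      rw [realize_not, realize_subst]
      simpa only [Function.comp_apply, hτ] using fun hys => hc (realize_exs.2 ⟨ys, hys⟩)
    obtain ⟨ys, hys⟩ := realize_exs.1 h
    have := realize_alls.1 (hN hmem).2 ys
    rw [realize_not, realize_subst] at this
    exact this hys

end Transfer

end FirstOrder.Language

namespace Stmt13

open FirstOrder.Language.BoundedFormula

section Pseudofinite

variable {L : FirstOrder.Language} {G : Type*} [SG : L.Structure G]

theorem SigmaOnePseudofinite.nonempty (hpsf : SigmaOnePseudofinite L G SG) : Nonempty G := by
  have h : G ⊨ (⊤ : L.BoundedFormula Empty 1).exs :=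
    hpsf 1 ⊤ IsQF.top fun E _ _ _ =>
      realize_exs.2 ⟨fun _ => Classical.arbitrary E, realize_top.2 trivial⟩
  obtain ⟨xs, -⟩ := realize_exs.1 h
  exact ⟨xs 0⟩

theorem SigmaOnePseudofinite.exists_finite_mem_piOneTheory (hpsf : SigmaOnePseudofinite L G SG)
    {φ : Σ m, L.BoundedFormula Empty m} (hφ : φ ∈ piOneTheory L G) :
    ∃ (E : Type) (_ : L.Structure E), Nonempty E ∧ Finite E ∧ φ ∈ piOneTheory L E := by
  by_contra! hfails
  have hex : G ⊨ φ.2.not.exs := hpsf _ _ hφ.1.not fun E SE _ _ => by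
    have := hfails E SE ‹_› ‹_›
    simp only [piOneTheory, Set.mem_ofPred_eq, hφ.1, true_and, Sentence.Realize, realize_alls,
      not_forall] at this
    exact realize_exs.2 (this.imp fun _ => realize_not.2)
  obtain ⟨xs, hxs⟩ := realize_exs.1 hex
  exact realize_not.1 hxs (realize_alls.1 hφ.2 xs)

theorem SigmaOnePseudofinite.exists_piOneTheory_subset_ultraproduct [Countable L.Symbols]
    (hpsf : SigmaOnePseudofinite L G SG) :
    ∃ (E : ℕ → Type) (SE : ∀ n, L.Structure (E n)), (∀ n, Finite (E n)) ∧
      (∀ n, Nonempty (E n)) ∧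
      piOneTheory L G ⊆ @piOneTheory L _ (ultraStruct L E SE (hyperfilter ℕ)) := by
  classical
  have := hpsf.nonempty
  have : Nonempty (piOneTheory L G) := ⟨⟨⟨0, ⊤⟩, IsQF.top, Sentence.realize_top G⟩⟩
  obtain ⟨e, he⟩ := exists_surjective_nat (piOneTheory L G)
  have finite_models (n : ℕ) : ∃ (E : Type) (_ : L.Structure E), Nonempty E ∧ Finite E ∧
      ∀ i ≤ n, (e i).1 ∈ piOneTheory L E := by
    obtain ⟨φ, hφ, hφs⟩ := exists_mem_piOneTheory_forall_subset (M := G)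
      ((Finset.range (n + 1)).image fun i => (e i).1) (by simp [Set.subset_def])
    obtain ⟨E, SE, hne, hfin, hE⟩ := hpsf.exists_finite_mem_piOneTheory hφ
    refine ⟨E, SE, hne, hfin, fun i hi => hφs E hE ?_⟩
    simp only [Finset.coe_image, Finset.coe_range]
    exact ⟨i, by simpa [Nat.lt_succ_iff] using hi, rfl⟩
  choose E SE hne hfin hE using finite_models
  refine ⟨E, SE, hfin, hne, fun φ hφ => ?_⟩
  obtain ⟨i, hi⟩ := he ⟨φ, hφ⟩
  let := SE
  refine ⟨hφ.1, (Ultraproduct.sentence_realize _).2 ?_⟩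
  filter_upwards [(eventually_ge_atTop i).filter_mono Nat.hyperfilter_le_atTop] with n hn
  have := (hE n i hn).2
  rwa [hi] at this

end Pseudofinite

/-- Let `L` be a language with finitely many function and constant symbols and no relation
symbols, and let `G` be a `Σ₁`-pseudofinite `L`-structure with named generators: constant
symbols `cs 1, …, cs d` of `L` whose interpretations generate `G`.  Then there are finite
`L`-structures `E n`, a nonprincipal ultrafilter `𝒰` on `ℕ`, and an `L`-embedding `β` of
`G` into the ultraproduct `E = ∏ E n / 𝒰` preserving satisfaction of `Σ₁`-formulas in
both directions. -/
theorem stmt_13 (L : FirstOrder.Language) (hrel : ∀ n, IsEmpty (L.Relations n))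
    (hfun : Finite (Σ n, L.Functions n))
    (G : Type) [SG : L.Structure G] (d : ℕ) (cs : Fin d → L.Constants)
    (hgen : Substructure.closure L (Set.range fun i => ((cs i : G) : G)) = ⊤)
    (hpsf : SigmaOnePseudofinite L G SG) :
    ∃ (E : ℕ → Type) (SE : ∀ n, L.Structure (E n)) (𝒰 : Ultrafilter ℕ),
      (∀ n, Finite (E n)) ∧ (∀ n, Nonempty (E n)) ∧
      (∀ S : Set ℕ, S.Finite → S ∉ 𝒰) ∧
      ∃ β : @FirstOrder.Language.Embedding L G ((𝒰 : Filter ℕ).Product E) SG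
          (ultraStruct L E SE 𝒰),
        ∀ (k m : ℕ) (θ : L.BoundedFormula (Fin k) m), θ.IsQF →
          ∀ p : Fin k → G,
            (θ.exs.Realize p ↔
              RealizeWith L (ultraStruct L E SE 𝒰) θ.exs fun i => β.toEmbedding (p i)) := by
  have : Countable L.Symbols := by
    have := hfun
    have : IsEmpty (Σ n, L.Relations n) := ⟨fun R => (hrel R.1).false R.2⟩
    infer_instance
  obtain ⟨E, SE, hfin, hne, hsub⟩ := hpsf.exists_piOneTheory_subset_ultraproduct
  let := ultraStruct L E SE (hyperfilter ℕ)
  obtain ⟨β, hβ⟩ := exists_embedding_realize_exs_iff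
    (surjective_realize_of_closure_range_constants_eq_top cs hgen) hsub
  exact ⟨E, SE, hyperfilter ℕ, hfin, hne, fun S hS => hS.notMem_hyperfilter, β,
    fun k m θ hθ p => hβ θ hθ p⟩

end Stmt13
end

section
/- Let L be the language of groups expanded by constant symbols c₁,…,c_d, and let G be a group generated by d elements named by c₁,…,c_d that is Σ₁-pseudofinite with respect to L. Let w be an element of the free group F_k on x₁,…,x_k (a group word in k variables), and suppose w is r-bounded for d, i.e., for every finite group H generated by d elements one has w(H) = w^{*r}(H). Then w(G) = w^{*r}(G): every element of the verbal subgroup of G determined by w is a product of at most r values of w or inverses of values of w. -/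
open FirstOrder Language

namespace Stmt14

/-- Function symbols of the language of groups expanded by `d` constant symbols
`c 1, …, c d`. -/
inductive GroupFunc (d : ℕ) : ℕ → Type
  | mul : GroupFunc d 2
  | inv : GroupFunc d 1
  | one : GroupFunc d 0
  | c (i : Fin d) : GroupFunc d 0

/-- The language of groups expanded by `d` constant symbols; no relation symbols. -/
def grpLang (d : ℕ) : FirstOrder.Language :=
  ⟨GroupFunc d, fun _ => Empty⟩

/-- The natural `grpLang d`-structure on a group `G` with the constants `c i` interpreted
as the distinguished generators `g i`. -/
def grpStructure (d : ℕ) (G : Type*) [Group G] (g : Fin d → G) : (grpLang d).Structure G where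
  funMap {n} f x :=
    match f with
    | .mul => x 0 * x 1
    | .inv => (x 0)⁻¹
    | .one => 1
    | .c i => g i
  RelMap {n} r := r.elim

/-- `φ` holds in `M` when `M` carries the `L`-structure `S`. -/
def SentenceHoldsIn (L : FirstOrder.Language) (M : Type*) (S : L.Structure M)
    (φ : L.Sentence) : Prop :=
  letI := S
  M ⊨ φ

/-- `M` (with `L`-structure `S`) is `Σ₁`-pseudofinite: every existential closure of a
quantifier-free formula that holds in every finite nonempty `L`-structure holds in `M`. -/
def SigmaOnePseudofinite (L : FirstOrder.Language) (M : Type*) (S : L.Structure M) : Prop :=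
  ∀ (m : ℕ) (θ : L.BoundedFormula Empty m), θ.IsQF →
    (∀ (E : Type) (SE : L.Structure E), Nonempty E → Finite E →
      SentenceHoldsIn L E SE θ.exs) →
    SentenceHoldsIn L M S θ.exs

/-- The set of values of the group word `w` in a group `M`. -/
def wordValues {k : ℕ} (w : FreeGroup (Fin k)) (M : Type*) [Group M] : Set M :=
  {x | ∃ v : Fin k → M, FreeGroup.lift v w = x}

/-- The verbal subgroup `w(M)` determined by the word `w`: the subgroup generated by all
values of `w`. -/
def verbalSubgroup {k : ℕ} (w : FreeGroup (Fin k)) (M : Type*) [Group M] : Subgroup M :=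
  Subgroup.closure (wordValues w M)

/-- `w^{*r}(M)`: the set of products of at most `r` elements, each of which is a value of
`w` or the inverse of a value of `w`. -/
def wordProducts {k : ℕ} (w : FreeGroup (Fin k)) (r : ℕ) (M : Type*) [Group M] : Set M :=
  {x | ∃ l : List M, l.length ≤ r ∧
    (∀ y ∈ l, y ∈ wordValues w M ∨ y⁻¹ ∈ wordValues w M) ∧ l.prod = x}

/-! Since `G` is generated by `g`, every `x ∈ w(G)` is `V(g)` for some `V` in the verbal subgroup
`w(F_d)` of the free group. The existential sentence "the group laws fail somewhere, or `V(c)` is a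
product of `r` values of `w` or their inverses" holds in every finite structure: trivially when it
is not a group, and in a finite group `E` because `V(c)` lies in `w(H) = w^{*r}(H)` for the
`d`-generated subgroup `H = ⟨c⟩`. By `Σ₁`-pseudofiniteness it holds in `G`, where the group laws do
hold, so `x = V(g) ∈ w^{*r}(G)`. -/

section Words

variable {k r : ℕ} {A B M : Type*} [Group A] [Group B] [Group M] (w : FreeGroup (Fin k))

theorem map_lift_apply {β : Type*} (f : A →* B) (a : β → A) (x : FreeGroup β) :
    f (FreeGroup.lift a x) = FreeGroup.lift (f ∘ a) x :=
  FreeGroup.lift_unique (f.comp (FreeGroup.lift a)) (by simp)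

theorem lift_map_apply {β γ : Type*} (f : β → γ) (a : γ → M) (x : FreeGroup β) :
    FreeGroup.lift a (FreeGroup.map f x) = FreeGroup.lift (a ∘ f) x := by
  rw [FreeGroup.map_eq_lift, map_lift_apply]
  simp [Function.comp_def]

theorem image_wordValues_subset (f : A →* B) : f '' wordValues w A ⊆ wordValues w B := by
  rintro _ ⟨_, ⟨v, rfl⟩, rfl⟩
  exact ⟨f ∘ v, (map_lift_apply f v w).symm⟩

theorem image_wordValues_of_surjective {f : A →* B} (hf : Function.Surjective f) :
    f '' wordValues w A = wordValues w B := by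
  refine (image_wordValues_subset w f).antisymm ?_
  rintro _ ⟨v, rfl⟩
  refine ⟨_, ⟨Function.surjInv hf ∘ v, rfl⟩, ?_⟩
  rw [map_lift_apply, ← Function.comp_assoc, Function.comp_surjInv, Function.id_comp]

theorem map_mem_verbalSubgroup (f : A →* B) {x : A} (hx : x ∈ verbalSubgroup w A) :
    f x ∈ verbalSubgroup w B := by
  have : (verbalSubgroup w A).map f ≤ verbalSubgroup w B := by
    rw [verbalSubgroup, MonoidHom.map_closure]
    exact Subgroup.closure_mono (image_wordValues_subset w f)
  exact this (Subgroup.mem_map_of_mem f hx)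

theorem map_verbalSubgroup_of_surjective {f : A →* B} (hf : Function.Surjective f) :
    (verbalSubgroup w A).map f = verbalSubgroup w B := by
  rw [verbalSubgroup, MonoidHom.map_closure, image_wordValues_of_surjective w hf, verbalSubgroup]

theorem wordProducts_subset_verbalSubgroup : wordProducts w r M ⊆ verbalSubgroup w M := by
  rintro _ ⟨l, -, hl, rfl⟩
  refine list_prod_mem fun y hy => ?_
  rcases hl y hy with hy | hy
  · exact Subgroup.subset_closure hy
  · rw [← inv_inv y]
    exact inv_mem (Subgroup.subset_closure hy)

theorem mem_wordProducts_iff_ofFn {x : M} :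
    x ∈ wordProducts w r M ↔ ∃ (σ : Fin r → Bool) (u : Fin r → Fin k → M),
      (List.ofFn fun j => cond (σ j) (FreeGroup.lift (u j) w) (FreeGroup.lift (u j) w)⁻¹).prod
        = x := by
  constructor
  · rintro ⟨l, hlen, hl, rfl⟩
    induction l generalizing r with
    | nil =>
      -- pad with copies of the trivial value `w(1, …, 1) = 1`
      have h1 : FreeGroup.lift (fun _ : Fin k => (1 : M)) = 1 :=
        FreeGroup.ext_hom _ _ fun _ => by simp
      exact ⟨fun _ => true, fun _ _ => 1, by simp [h1]⟩
    | cons y l ih =>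
      obtain _ | r := r
      · simp at hlen
      obtain ⟨σ, u, hprod⟩ := ih (by simpa using hlen) fun z hz => hl z (.tail _ hz)
      obtain ⟨b, v, rfl⟩ : ∃ b v, cond b (FreeGroup.lift v w) (FreeGroup.lift v w)⁻¹ = y := by
        rcases hl y (.head _) with ⟨v, hv⟩ | ⟨v, hv⟩
        · exact ⟨true, v, hv⟩
        · exact ⟨false, v, by simp [hv]⟩
      exact ⟨Fin.cons b σ, Fin.cons v u, by simp [List.ofFn_succ, hprod]⟩
  · rintro ⟨σ, u, rfl⟩
    refine ⟨_, List.length_ofFn.le, fun y hy => ?_, rfl⟩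
    obtain ⟨j, rfl⟩ := List.mem_ofFn.mp hy
    cases σ j
    · exact .inr ⟨u j, (inv_inv _).symm⟩
    · exact .inl ⟨u j, rfl⟩

/-- `∏ⱼ w(u (j, ·)) ^ (±1)`, the sign of the `j`-th factor given by `σ j`. -/
def signedWord (σ : Fin r → Bool) : FreeGroup (Fin r × Fin k) :=
  (List.ofFn fun j =>
    cond (σ j) (FreeGroup.map (Prod.mk j) w) (FreeGroup.map (Prod.mk j) w)⁻¹).prod

theorem lift_signedWord (σ : Fin r → Bool) (u : Fin r × Fin k → M) :
    FreeGroup.lift u (signedWord w σ) =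
      (List.ofFn fun j => cond (σ j) (FreeGroup.lift (fun i => u (j, i)) w)
        (FreeGroup.lift (fun i => u (j, i)) w)⁻¹).prod := by
  rw [signedWord, map_list_prod, List.map_ofFn]
  congr 2
  funext j
  cases h : σ j <;> simp [h, lift_map_apply, Function.comp_def]

theorem mem_wordProducts_iff {x : M} :
    x ∈ wordProducts w r M ↔
      ∃ (σ : Fin r → Bool) (u : Fin r × Fin k → M), FreeGroup.lift u (signedWord w σ) = x := by
  simp only [mem_wordProducts_iff_ofFn, lift_signedWord]
  exact ⟨fun ⟨σ, u, h⟩ => ⟨σ, Function.uncurry u, h⟩, fun ⟨σ, u, h⟩ => ⟨σ, Function.curry u, h⟩⟩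

theorem map_mem_wordProducts (f : A →* B) {x : A} (hx : x ∈ wordProducts w r A) :
    f x ∈ wordProducts w r B := by
  obtain ⟨σ, u, rfl⟩ := (mem_wordProducts_iff w).mp hx
  exact (mem_wordProducts_iff w).mpr ⟨σ, f ∘ u, (map_lift_apply f u _).symm⟩

def IsBoundedFor (r d : ℕ) : Prop :=
  ∀ (H : Type) [Group H] [Finite H], (∃ h : Fin d → H, Subgroup.closure (Set.range h) = ⊤) →
    (verbalSubgroup w H : Set H) ⊆ wordProducts w r H

theorem lift_mem_wordProducts_of_finite {d : ℕ} (hw : IsBoundedFor w r d) {E : Type} [Group E]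
    [Finite E] (c : Fin d → E) {V : FreeGroup (Fin d)}
    (hV : V ∈ verbalSubgroup w (FreeGroup (Fin d))) :
    FreeGroup.lift c V ∈ wordProducts w r E := by
  set H := Subgroup.closure (Set.range c)
  let c' : Fin d → H := fun i => ⟨c i, Subgroup.subset_closure ⟨i, rfl⟩⟩
  have hgen : Subgroup.closure (Set.range c') = ⊤ := by
    convert Subgroup.closure_closure_coe_preimage (k := Set.range c) using 2
    ext
    simp [c', Subtype.ext_iff]
  have hmem := hw H ⟨c', hgen⟩ (map_mem_verbalSubgroup w (FreeGroup.lift c') hV)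
  have hE := map_mem_wordProducts w H.subtype hmem
  rw [map_lift_apply] at hE
  exact hE

end Words

section Formulas

variable {d k : ℕ} {α : Type*}

instance : Mul ((grpLang d).Term α) := ⟨Functions.apply₂ (L := grpLang d) GroupFunc.mul⟩

instance : Inv ((grpLang d).Term α) := ⟨Functions.apply₁ (L := grpLang d) GroupFunc.inv⟩

instance : One ((grpLang d).Term α) := ⟨Constants.term (L := grpLang d) GroupFunc.one⟩

def constTerm (i : Fin d) : (grpLang d).Term α := Constants.term (L := grpLang d) (GroupFunc.c i)

def wordTerm {β : Type*} [DecidableEq β] (W : FreeGroup β) (τ : β → (grpLang d).Term α) :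
    (grpLang d).Term α :=
  (W.toWord.map fun p => cond p.2 (τ p.1) (τ p.1)⁻¹).prod

def groupLaws (x y z : (grpLang d).Term α) : (grpLang d).Formula α :=
  (x * y * z).equal (x * (y * z)) ⊓ (1 * x).equal x ⊓ (x⁻¹ * x).equal 1

/-- The free variables are three witnesses `x` for a failure of the group laws and the arguments
`u (j, i)` of `r` values of `w`. -/
noncomputable def productFormula (w : FreeGroup (Fin k)) (r : ℕ) (V : FreeGroup (Fin d)) :
    (grpLang d).Formula (Empty ⊕ (Fin 3 ⊕ Fin r × Fin k)) :=
  let x (i : Fin 3) : (grpLang d).Term _ := Term.var (Sum.inr (Sum.inl i))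
  ∼(groupLaws (x 0) (x 1) (x 2)) ⊔ Formula.iSup fun σ : Fin r → Bool =>
    (wordTerm V constTerm).equal (wordTerm (signedWord w σ) fun p => Term.var (Sum.inr (Sum.inr p)))

noncomputable def productSentence (w : FreeGroup (Fin k)) (r : ℕ) (V : FreeGroup (Fin d)) :
    (grpLang d).Sentence :=
  (productFormula w r V).iExs (Fin 3 ⊕ Fin r × Fin k)

theorem isQF_iSup {L : Language} {β : Type*} [Finite β] {n : ℕ} {f : β → L.BoundedFormula α n}
    (hf : ∀ b, (f b).IsQF) : (BoundedFormula.iSup f).IsQF := by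
  rw [BoundedFormula.iSup]
  suffices ∀ l : List β, ((l.map f).foldr (· ⊔ ·) ⊥).IsQF from this _
  intro l
  induction l with
  | nil => exact BoundedFormula.isQF_bot
  | cons b l ih => exact (hf b).sup ih

theorem isQF_productFormula (w : FreeGroup (Fin k)) (r : ℕ) (V : FreeGroup (Fin d)) :
    (productFormula w r V).IsQF := by
  have hatom {β : Type} (t₁ t₂ : (grpLang d).Term β) : (t₁.equal t₂).IsQF :=
    (BoundedFormula.IsAtomic.equal _ _).isQF
  exact ((((hatom _ _).inf (hatom _ _)).inf (hatom _ _)).not).sup (isQF_iSup fun _ => hatom _ _)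

end Formulas

class IsGroupInterpretation (d : ℕ) (M : Type*) [Mul M] [Inv M] [One M]
    [(grpLang d).Structure M] : Prop where
  funMap_mul (a b : M) : Structure.funMap (L := grpLang d) GroupFunc.mul ![a, b] = a * b
  funMap_inv (a : M) : Structure.funMap (L := grpLang d) GroupFunc.inv ![a] = a⁻¹
  funMap_one : Structure.funMap (L := grpLang d) GroupFunc.one default = (1 : M)

def constants (d : ℕ) (M : Type*) [(grpLang d).Structure M] (i : Fin d) : M :=
  Structure.funMap (L := grpLang d) (GroupFunc.c i) default

section Realize

variable {d k : ℕ} {α M : Type*} [(grpLang d).Structure M] {v : α → M}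

@[simp]
theorem realize_constTerm (i : Fin d) :
    (constTerm i : (grpLang d).Term α).realize v = constants d M i :=
  Term.realize_constants

section Operations

variable [Mul M] [Inv M] [One M] [IsGroupInterpretation d M]

@[simp]
theorem realize_mul (t₁ t₂ : (grpLang d).Term α) :
    (t₁ * t₂).realize v = t₁.realize v * t₂.realize v :=
  (Term.realize_functions_apply₂ (t₁ := t₁) (t₂ := t₂)).trans (IsGroupInterpretation.funMap_mul _ _)

@[simp]
theorem realize_inv (t : (grpLang d).Term α) : t⁻¹.realize v = (t.realize v)⁻¹ :=
  (Term.realize_functions_apply₁ (t := t)).trans (IsGroupInterpretation.funMap_inv _)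

@[simp]
theorem realize_one : (1 : (grpLang d).Term α).realize v = 1 :=
  Term.realize_constants.trans IsGroupInterpretation.funMap_one

theorem realize_list_prod (l : List ((grpLang d).Term α)) :
    l.prod.realize v = (l.map (Term.realize v)).prod := by
  induction l with
  | nil => exact realize_one
  | cons t l ih => simp [ih]

theorem realize_groupLaws (x y z : (grpLang d).Term α) :
    (groupLaws x y z).Realize v ↔
      x.realize v * y.realize v * z.realize v = x.realize v * (y.realize v * z.realize v) ∧
        1 * x.realize v = x.realize v ∧ (x.realize v)⁻¹ * x.realize v = 1 := by
  simp [groupLaws, and_assoc]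

theorem realize_productSentence_of_not_groupLaws {w : FreeGroup (Fin k)} {r : ℕ}
    {V : FreeGroup (Fin d)} {a b c : M} (h : ¬(a * b * c = a * (b * c) ∧ 1 * a = a ∧ a⁻¹ * a = 1)) :
    M ⊨ productSentence w r V := by
  simp only [Sentence.Realize, productSentence, Formula.realize_iExs]
  refine ⟨Sum.elim ![a, b, c] fun _ => a, Formula.realize_sup.2 (.inl ?_)⟩
  simpa [realize_groupLaws] using h

end Operations

theorem realize_wordTerm [Group M] [IsGroupInterpretation d M] {β : Type*} [DecidableEq β]
    (W : FreeGroup β) (τ : β → (grpLang d).Term α) :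
    (wordTerm W τ).realize v = FreeGroup.lift (fun b => (τ b).realize v) W := by
  conv_rhs => rw [← FreeGroup.mk_toWord (x := W), FreeGroup.lift_mk]
  rw [wordTerm, realize_list_prod, List.map_map]
  congr 1
  refine List.map_congr_left ?_
  rintro ⟨b, _ | _⟩ _ <;> simp

theorem realize_productSentence_iff [Group M] [IsGroupInterpretation d M]
    {w : FreeGroup (Fin k)} {r : ℕ} {V : FreeGroup (Fin d)} :
    M ⊨ productSentence w r V ↔ FreeGroup.lift (constants d M) V ∈ wordProducts w r M := by
  simp only [Sentence.Realize, productSentence, productFormula, Formula.realize_iExs,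
    Formula.realize_sup, Formula.realize_not, realize_groupLaws, mul_assoc, one_mul,
    inv_mul_cancel, and_self, not_true_eq_false, false_or, Formula.realize_iSup,
    Formula.realize_equal, realize_wordTerm, realize_constTerm, Term.realize_var, Sum.elim_inr,
    mem_wordProducts_iff]
  constructor
  · rintro ⟨i, σ, h⟩
    exact ⟨σ, _, h.symm⟩
  · rintro ⟨σ, u, h⟩
    exact ⟨Sum.elim (fun _ => 1) u, σ, h.symm⟩

end Realize

theorem SigmaOnePseudofinite.sentenceHoldsIn_iExs {L : Language} {M : Type*} {S : L.Structure M}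
    (h : SigmaOnePseudofinite L M S) {γ : Type*} [Finite γ] {φ : L.Formula (Empty ⊕ γ)}
    (hφ : φ.IsQF) (hfin : ∀ (E : Type) (SE : L.Structure E), Nonempty E → Finite E →
      SentenceHoldsIn L E SE (φ.iExs γ)) :
    SentenceHoldsIn L M S (φ.iExs γ) :=
  h _ _ (hφ.relabel _) hfin

theorem realize_productSentence_of_finite {d k r : ℕ} {w : FreeGroup (Fin k)}
    (hw : IsBoundedFor w r d) {V : FreeGroup (Fin d)}
    (hV : V ∈ verbalSubgroup w (FreeGroup (Fin d)))
    (E : Type) [(grpLang d).Structure E] [Finite E] :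
    E ⊨ productSentence w r V := by
  let _ : Mul E := ⟨fun a b => Structure.funMap (L := grpLang d) GroupFunc.mul ![a, b]⟩
  let _ : Inv E := ⟨fun a => Structure.funMap (L := grpLang d) GroupFunc.inv ![a]⟩
  let _ : One E := ⟨Structure.funMap (L := grpLang d) GroupFunc.one default⟩
  have _ : IsGroupInterpretation d E := ⟨fun _ _ => rfl, fun _ => rfl, rfl⟩
  by_cases hlaws : ∀ a b c : E, a * b * c = a * (b * c) ∧ 1 * a = a ∧ a⁻¹ * a = 1
  · let _ : Group E := Group.ofLeftAxioms (fun a b c => (hlaws a b c).1)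
      (fun a => (hlaws a a a).2.1) (fun a => (hlaws a a a).2.2)
    exact realize_productSentence_iff.2 (lift_mem_wordProducts_of_finite w hw _ hV)
  · simp only [not_forall] at hlaws
    obtain ⟨a, b, c, h⟩ := hlaws
    exact realize_productSentence_of_not_groupLaws h

/-- Let `G` be a group generated by `d` elements named by the constants of
`grpLang d`, and suppose `G` is `Σ₁`-pseudofinite with respect to this language.  Let
`w ∈ F_k` be a group word that is `r`-bounded for `d`, i.e. `w(H) = w^{*r}(H)` for every
finite `d`-generated group `H`.  Then `w(G) = w^{*r}(G)`. -/
theorem stmt_14 (d r k : ℕ) (G : Type) [Group G] (g : Fin d → G)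
    (hgen : Subgroup.closure (Set.range g) = ⊤)
    (hpsf : SigmaOnePseudofinite (grpLang d) G (grpStructure d G g))
    (w : FreeGroup (Fin k))
    (hbound : ∀ (H : Type) [Group H] [Finite H],
      (∃ h : Fin d → H, Subgroup.closure (Set.range h) = ⊤) →
      (verbalSubgroup w H : Set H) = wordProducts w r H) :
    (verbalSubgroup w G : Set G) = wordProducts w r G := by
  refine subset_antisymm (fun x hx => ?_) (wordProducts_subset_verbalSubgroup w)
  have hsurj := FreeGroup.lift_surjective_iff_closure_range_eq_top.2 hgen
  obtain ⟨V, hV, rfl⟩ := (map_verbalSubgroup_of_surjective w hsurj).symm ▸ hx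
  let _ := grpStructure d G g
  have _ : IsGroupInterpretation d G := ⟨fun _ _ => rfl, fun _ => rfl, rfl⟩
  have hw : IsBoundedFor w r d := fun H _ _ h => (hbound H h).subset
  have hG : G ⊨ productSentence w r V :=
    hpsf.sentenceHoldsIn_iExs (isQF_productFormula w r V) fun E SE _ _ =>
      letI := SE
      realize_productSentence_of_finite hw hV E
  exact realize_productSentence_iff.1 hG

end Stmt14
end
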